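/- arXiv:2602.14500 — 2 statements merged into one kernel-verified Lean document; each statement's English description precedes it below -/
import Mathlib

section
/- Let G be a graph of order n, k ≥ 0, and V_1,…,V_t ⊆ V(G) with V_1 ∪ … ∪ V_t = V(G). Let H_i be the convex hull of V_i in G. Then μ_k(G) ≤ Σ_{i=1}^t μ_k(H_i). -/
open scoped Classical

variable {V : Type*}

/-- The number of internal vertices of a walk `p` that lie in `X`. -/
noncomputable def internalCount {G : SimpleGraph V} {u v : V}
    (p : G.Walk u v) (X : Finset V) : ℕ :=
  p.support.tail.dropLast.countP (fun x => decide (x ∈ X))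

/-- `X` is a mutual `k`-visible set in `G`: every pair of distinct vertices of `X`
admits a shortest path with at most `k` internal vertices in `X`. -/
def MutVis (G : SimpleGraph V) (X : Finset V) (k : ℕ) : Prop :=
  ∀ u ∈ X, ∀ v ∈ X, u ≠ v → ∃ p : G.Walk u v, p.IsPath ∧ p.length = G.dist u v ∧
    internalCount p X ≤ k

/-- The mutual `k`-visibility number of `G`. -/
noncomputable def muK [Fintype V] (G : SimpleGraph V) (k : ℕ) : ℕ :=
  sSup {n | ∃ X : Finset V, MutVis G X k ∧ X.card = n}

/-- A vertex set `W` is convex in `G` if every shortest path between vertices of `W`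
lies entirely in `W`. -/
def GIsConvex (G : SimpleGraph V) (W : Set V) : Prop :=
  ∀ u ∈ W, ∀ v ∈ W, ∀ p : G.Walk u v, p.IsPath → p.length = G.dist u v →
    ∀ x ∈ p.support, x ∈ W

/-- The convex hull of a set of vertices: the smallest convex set containing it. -/
def convexHullSet (G : SimpleGraph V) (S : Set V) : Set V :=
  ⋂₀ {W | S ⊆ W ∧ GIsConvex G W}

/-!
Fix a largest mutual-visibility set `X` of `G` and assign every vertex to one part `V_i`
containing it. The vertices of `X` assigned to `V_i` lie in the convex hull `H_i`, and a shortest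
`G`-path between two of them stays inside `H_i` by convexity; it is then a shortest path of `H_i`
that meets the smaller set in no more internal vertices than it meets `X`. So each fiber is
mutually `k`-visible in `H_i`, and summing over the fibers gives the bound.
-/

open SimpleGraph

lemma convexHullSet_isConvex (G : SimpleGraph V) (S : Set V) :
    GIsConvex G (convexHullSet G S) :=
  fun _ hu _ hv p hp hlen x hx W hW => hW.2 _ (hu W hW) _ (hv W hW) p hp hlen x hx

lemma subset_convexHullSet (G : SimpleGraph V) (S : Set V) : S ⊆ convexHullSet G S :=
  fun _ hx _ hW => hW.1 hx

section internalCount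

variable {V' : Type*} {G : SimpleGraph V} {G' : SimpleGraph V'} {u v : V}

lemma internalCount_mono (p : G.Walk u v) {X Y : Finset V} (h : Y ⊆ X) :
    internalCount p Y ≤ internalCount p X :=
  List.countP_mono_left fun x _ hx => by simpa using h (by simpa using hx)

lemma internalCount_map (f : G ↪g G') (p : G.Walk u v) (X : Finset V) :
    internalCount (p.map f.toHom) (X.map f.toEmbedding) = internalCount p X := by
  simp only [internalCount, Walk.support_map, ← List.map_tail, ← List.map_dropLast,
    List.countP_map]
  congr 1
  funext x
  simp

end internalCount

section dist

variable {G : SimpleGraph V} {s : Set V} {u v : V}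

lemma SimpleGraph.Walk.length_induce (p : G.Walk u v) (hp : ∀ x ∈ p.support, x ∈ s) :
    (p.induce s hp).length = p.length := by
  induction p with
  | nil => rfl
  | cons _ _ ih => simp [ih]

lemma SimpleGraph.Walk.length_induce_eq_dist (p : G.Walk u v) (hlen : p.length = G.dist u v)
    (hp : ∀ x ∈ p.support, x ∈ s) :
    (p.induce s hp).length = (G.induce s).dist ⟨u, hp _ p.start_mem_support⟩
      ⟨v, hp _ p.end_mem_support⟩ := by
  have hle := dist_le (p.induce s hp)
  obtain ⟨r, hr⟩ := (p.induce s hp).reachable.exists_walk_length_eq_dist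
  have hge : G.dist u v ≤ r.length := by
    have := dist_le (r.map (Embedding.induce s).toHom)
    rwa [Walk.length_map] at this
  rw [Walk.length_induce] at hle ⊢
  omega

end dist

section MutVis

variable {G : SimpleGraph V} {X Y : Finset V} {k : ℕ}

lemma MutVis.subset (hX : MutVis G X k) (hYX : Y ⊆ X) : MutVis G Y k := by
  intro u hu v hv huv
  obtain ⟨p, hp, hlen, hcount⟩ := hX u (hYX hu) v (hYX hv) huv
  exact ⟨p, hp, hlen, (internalCount_mono p hYX).trans hcount⟩

lemma MutVis.subtype_induce {W : Set V} (hW : GIsConvex G W) (hX : MutVis G X k)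
    (hXW : ↑X ⊆ W) : MutVis (G.induce W) (X.subtype (· ∈ W)) k := by
  intro u hu v hv huv
  obtain ⟨p, -, hlen, hcount⟩ :=
    hX u (Finset.mem_subtype.mp hu) v (Finset.mem_subtype.mp hv) (Subtype.coe_ne_coe.mpr huv)
  have hpW : ∀ x ∈ p.support, x ∈ W := hW u u.2 v v.2 p (p.isPath_of_length_eq_dist hlen) hlen
  have hdist := p.length_induce_eq_dist hlen hpW
  refine ⟨p.induce W hpW, Walk.isPath_of_length_eq_dist _ hdist, hdist, ?_⟩
  rwa [← internalCount_map (Embedding.induce W), Walk.map_induce,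
    show (X.subtype (· ∈ W)).map (Embedding.induce W).toEmbedding = X from
      Finset.subtype_map_of_mem hXW]

variable [Fintype V]

lemma bddAbove_mutVis_card (G : SimpleGraph V) (k : ℕ) :
    BddAbove {n | ∃ X : Finset V, MutVis G X k ∧ X.card = n} :=
  ⟨Fintype.card V, fun _ ⟨X, _, hX⟩ => hX ▸ X.card_le_univ⟩

lemma MutVis.card_le_muK (hX : MutVis G X k) : X.card ≤ muK G k :=
  le_csSup (bddAbove_mutVis_card G k) ⟨X, hX, rfl⟩

lemma exists_mutVis_card_eq_muK (G : SimpleGraph V) (k : ℕ) :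
    ∃ X : Finset V, MutVis G X k ∧ X.card = muK G k := by
  refine Nat.sSup_mem ?_ (bddAbove_mutVis_card G k)
  exact ⟨0, ∅, fun u hu => by simp at hu, rfl⟩

lemma MutVis.card_le_muK_induce {W : Set V} (hW : GIsConvex G W) (hX : MutVis G X k)
    (hXW : ↑X ⊆ W) : X.card ≤ muK (G.induce W) k := by
  have hcard : (X.subtype (· ∈ W)).card = X.card := by
    rw [Finset.card_subtype, Finset.filter_true_of_mem hXW]
  exact hcard ▸ (hX.subtype_induce hW hXW).card_le_muK

end MutVis

theorem stmt3_general [Fintype V] (G : SimpleGraph V) (k : ℕ)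
    (t : ℕ) (Vs : Fin t → Set V) (hcov : (⋃ i, Vs i) = Set.univ) :
    muK G k ≤ ∑ i : Fin t, muK (G.induce (convexHullSet G (Vs i))) k := by
  obtain ⟨X, hX, hXcard⟩ := exists_mutVis_card_eq_muK G k
  choose part hpart using fun x : V => Set.mem_iUnion.mp (hcov ▸ Set.mem_univ x)
  calc muK G k = ∑ i : Fin t, (X.filter (part · = i)).card := by
        rw [← hXcard]
        exact Finset.card_eq_sum_card_fiberwise fun x _ => Finset.mem_univ (part x)
    _ ≤ ∑ i : Fin t, muK (G.induce (convexHullSet G (Vs i))) k := by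
        refine Finset.sum_le_sum fun i _ => ?_
        have hfiber : ↑(X.filter (part · = i)) ⊆ convexHullSet G (Vs i) := fun x hx =>
          subset_convexHullSet G _ ((Finset.mem_filter.mp hx).2 ▸ hpart x)
        exact (hX.subset (Finset.filter_subset _ X)).card_le_muK_induce
          (convexHullSet_isConvex G _) hfiber

theorem stmt3 [Fintype V] (G : SimpleGraph V) (hG : G.Connected) (k : ℕ)
    (t : ℕ) (Vs : Fin t → Set V) (hcov : (⋃ i, Vs i) = Set.univ) :
    muK G k ≤ ∑ i : Fin t, muK (G.induce (convexHullSet G (Vs i))) k :=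
  stmt3_general G k t Vs hcov
end

section
/- For every connected graph G of order n and every k ≥ 0, τ_k(G) ≤ ⌈n/(k+2)⌉, where τ_k(G) is the mutual k-visibility covering number. -/
open scoped Classical

variable {V : Type*}

/-- The mutual `k`-visibility covering number: the minimum number of parts in a
partition of `V(G)` into mutual `k`-visible sets. -/
noncomputable def tauK [Fintype V] (G : SimpleGraph V) (k : ℕ) : ℕ :=
  sInf {n | ∃ P : Finpartition (Finset.univ : Finset V),
    (∀ X ∈ P.parts, MutVis G X k) ∧ P.parts.card = n}

/-!
Chop `V(G)` into an equipartition with `⌈n / (k + 2)⌉` parts, each of at most `k + 2` vertices.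
Every such small set `X` is mutually `k`-visible: the internal vertices of a shortest
`u`–`v` path (which exists since `G` is connected) are distinct and differ from its ends
`u, v ∈ X`, so at most `|X| - 2 ≤ k` of them lie in `X`.
-/

open Finset

namespace Finpartition

theorem exists_card_parts_eq_ceilDiv {α : Type*} [DecidableEq α] (s : Finset α) {c : ℕ}
    (hc : 0 < c) :
    ∃ P : Finpartition s, #P.parts = #s ⌈/⌉ c ∧ ∀ t ∈ P.parts, #t ≤ c := by
  rcases s.eq_empty_or_nonempty with rfl | hs
  · exact ⟨⊥, by simp, by simp⟩
  set m := #s ⌈/⌉ c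
  have hsm : #s ≤ c * m := (ceilDiv_le_iff_le_mul hc).1 le_rfl
  have hm : m ≠ 0 := by
    rintro hm
    rw [hm, mul_zero] at hsm
    exact hs.card_pos.ne' (Nat.le_zero.1 hsm)
  have hms : m ≤ #s := (ceilDiv_le_iff_le_mul hc).2 (Nat.le_mul_of_pos_left _ hc)
  obtain ⟨P, hP, hPm⟩ := exists_equipartition_card_eq s hm hms
  refine ⟨P, hPm, fun t ht => ?_⟩
  by_contra! htc
  -- A part larger than `c` forces every part to have at least `c` elements, so `#s = c * m`
  -- and the equipartition has no large parts at all.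
  have hle := hP.card_part_le_average_add_one ht
  rw [hPm] at hle
  have hcs : c * m ≤ #s := by
    rw [← Nat.le_div_iff_mul_le (Nat.pos_of_ne_zero hm)]; omega
  have hmod : #s % m = 0 := by
    rw [le_antisymm hsm hcs, Nat.mul_mod_left]
  have hlarge := hP.card_large_parts_eq_mod
  rw [hPm, hmod, card_eq_zero, filter_eq_empty_iff] at hlarge
  have hdiv : #s / m = c := by
    rw [le_antisymm hsm hcs, Nat.mul_div_cancel _ (Nat.pos_of_ne_zero hm)]
  exact hlarge ht (by omega)

end Finpartition

section

variable {G : SimpleGraph V}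

open SimpleGraph in
lemma internalCount_add_two_le_card {u v : V} {p : G.Walk u v} (hp : p.IsPath) (huv : u ≠ v)
    {X : Finset V} (hu : u ∈ X) (hv : v ∈ X) : internalCount p X + 2 ≤ #X := by
  cases p with
  | nil => exact absurd rfl huv
  | cons hadj q =>
    have hcount : ((Walk.cons hadj q).support.filter (· ∈ X)).length ≤ #X := by
      rw [← List.toFinset_card_of_nodup (hp.support_nodup.filter _)]
      exact card_le_card fun x hx => by simpa using (List.mem_filter.1 (List.mem_toFinset.1 hx)).2
    rw [Walk.support_cons, ← q.dropLast_support_concat] at hcount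
    simp only [List.filter_cons_of_pos (p := fun x => decide (x ∈ X)) (by simpa using hu),
      List.filter_append, List.filter_singleton, decide_eq_true hv, cond_true, List.length_cons,
      List.length_append] at hcount
    rw [internalCount, Walk.support_cons, List.tail_cons, List.countP_eq_length_filter]
    omega

lemma mutVis_of_card_le (hG : G.Connected) {k : ℕ} {X : Finset V} (hX : #X ≤ k + 2) :
    MutVis G X k := by
  intro u hu v hv huv
  obtain ⟨p, hp, hlen⟩ := hG.exists_path_of_dist u v
  exact ⟨p, hp, hlen, by have := internalCount_add_two_le_card hp huv hu hv; omega⟩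

lemma tauK_le_card_parts [Fintype V] {k : ℕ} (P : Finpartition (univ : Finset V))
    (hP : ∀ X ∈ P.parts, MutVis G X k) : tauK G k ≤ #P.parts :=
  Nat.sInf_le ⟨P, hP, rfl⟩

end

theorem stmt14 [Fintype V] (G : SimpleGraph V) (hG : G.Connected) (k : ℕ) :
    tauK G k ≤ (Fintype.card V + k + 1) / (k + 2) := by
  obtain ⟨P, hcard, hsmall⟩ :=
    Finpartition.exists_card_parts_eq_ceilDiv (univ : Finset V) (c := k + 2) (by omega)
  calc tauK G k ≤ #P.parts := tauK_le_card_parts P fun X hX => mutVis_of_card_le hG (hsmall X hX)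
    _ = (Fintype.card V + k + 1) / (k + 2) := by
      rw [hcard, card_univ, Nat.ceilDiv_eq_add_pred_div]; congr 1
end
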